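/- arXiv:1304.4734 — 3 statements merged into one kernel-verified Lean document; each statement's English description precedes it below -/
import Mathlib

section
/- Let ξ and Y be real numbers with 1 ≤ ξ ≤ Y. Then ∫_Y^∞ e^{-u} u^ξ du ≤ e^{-Y} Y^ξ (1 + ξ²/Y). -/
/-!
Two integrations by parts give
`∫_Y^∞ e^{-u} u^ξ = e^{-Y} Y^ξ + ξ e^{-Y} Y^{ξ-1} + ξ (ξ - 1) ∫_Y^∞ e^{-u} u^{ξ-2}`.
Since `e^{-u} u^ξ` decreases on `[ξ, ∞)`, the last integrand is at most `e^{-Y} Y^ξ u^{-2}`,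
whose integral over `(Y, ∞)` is `e^{-Y} Y^ξ / Y`; collecting terms gives `1 + ξ / Y + ξ (ξ - 1) / Y`.
-/

open Real MeasureTheory Set Filter Topology

theorem hasDerivAt_exp_neg_mul_rpow (s : ℝ) {u : ℝ} (hu : u ≠ 0) :
    HasDerivAt (fun u => exp (-u) * u ^ s)
      (s * (exp (-u) * u ^ (s - 1)) - exp (-u) * u ^ s) u :=
  ((hasDerivAt_neg u).exp.mul (hasDerivAt_rpow_const (Or.inl hu))).congr_deriv (by ring)

theorem tendsto_exp_neg_mul_rpow_atTop (s : ℝ) :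
    Tendsto (fun u => exp (-u) * u ^ s) atTop (𝓝 0) :=
  (tendsto_rpow_mul_exp_neg_mul_atTop_nhds_zero s 1 one_pos).congr fun _ => by
    rw [neg_one_mul, mul_comm]

theorem integrableOn_exp_neg_mul_rpow_Ioi (s : ℝ) {a : ℝ} (ha : 0 < a) :
    IntegrableOn (fun u => exp (-u) * u ^ s) (Ioi a) :=
  integrable_of_isBigO_exp_neg one_half_pos
    (continuousOn_id.neg.rexp.mul
      (continuousOn_id.rpow_const fun _ hu => Or.inl (ha.trans_le hu).ne'))
    (Gamma_integrand_isLittleO s).isBigO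

theorem integral_Ioi_exp_neg_mul_rpow (s : ℝ) {a : ℝ} (ha : 0 < a) :
    ∫ u in Ioi a, exp (-u) * u ^ s =
      exp (-a) * a ^ s + s * ∫ u in Ioi a, exp (-u) * u ^ (s - 1) := by
  have hint := integrableOn_exp_neg_mul_rpow_Ioi (s - 1) ha
  have hFTC := integral_Ioi_of_hasDerivAt_of_tendsto'
    (fun u hu => hasDerivAt_exp_neg_mul_rpow s (ha.trans_le hu).ne')
    ((hint.const_mul s).sub (integrableOn_exp_neg_mul_rpow_Ioi s ha))
    (tendsto_exp_neg_mul_rpow_atTop s)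
  rw [integral_sub (hint.const_mul s) (integrableOn_exp_neg_mul_rpow_Ioi s ha),
    integral_const_mul] at hFTC
  linarith

theorem antitoneOn_exp_neg_mul_rpow {s : ℝ} (hs : 0 ≤ s) :
    AntitoneOn (fun u => exp (-u) * u ^ s) (Ici s) := by
  refine antitoneOn_of_hasDerivWithinAt_nonpos (convex_Ici s)
    (continuous_neg.rexp.mul (continuous_rpow_const hs)).continuousOn
    (fun u hu => (hasDerivAt_exp_neg_mul_rpow s ?_).hasDerivWithinAt) fun u hu => ?_
  all_goals rw [interior_Ici, mem_Ioi] at hu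
  · linarith
  · have hu0 : 0 < u := hs.trans_lt hu
    rw [rpow_sub_one hu0.ne', sub_nonpos,
      show s * (exp (-u) * (u ^ s / u)) = s / u * (exp (-u) * u ^ s) by ring]
    exact mul_le_of_le_one_left (by positivity) ((div_le_one hu0).mpr hu.le)

theorem integral_Ioi_exp_neg_mul_rpow_sub_two_le {s a : ℝ} (hs : 0 ≤ s) (hsa : s ≤ a)
    (ha : 0 < a) : ∫ u in Ioi a, exp (-u) * u ^ (s - 2) ≤ exp (-a) * a ^ s / a := by
  have hdecay : ∀ u ∈ Ioi a, exp (-u) * u ^ (s - 2) ≤ exp (-a) * a ^ s * u ^ (-2 : ℝ) := by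
    intro u hu
    rw [sub_eq_add_neg, rpow_add (ha.trans hu), ← mul_assoc]
    exact mul_le_mul_of_nonneg_right
      (antitoneOn_exp_neg_mul_rpow hs hsa (hsa.trans hu.le) hu.le)
      (rpow_nonneg (ha.trans hu).le _)
  calc ∫ u in Ioi a, exp (-u) * u ^ (s - 2)
      ≤ ∫ u in Ioi a, exp (-a) * a ^ s * u ^ (-2 : ℝ) :=
        setIntegral_mono_on (integrableOn_exp_neg_mul_rpow_Ioi (s - 2) ha)
          ((integrableOn_Ioi_rpow_of_lt (by norm_num) ha).const_mul _) measurableSet_Ioi hdecay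
    _ = exp (-a) * a ^ s / a := by
        rw [integral_const_mul, integral_Ioi_rpow_of_lt (by norm_num) ha]
        norm_num [rpow_neg_one, div_eq_mul_inv]

theorem incomplete_gamma_tail_bound (ξ Y : ℝ) (hξ : 1 ≤ ξ) (hY : ξ ≤ Y) :
    ∫ u in Set.Ioi Y, Real.exp (-u) * u ^ ξ ≤
      Real.exp (-Y) * Y ^ ξ * (1 + ξ ^ 2 / Y) := by
  have hY0 : 0 < Y := by linarith
  have hξ0 : 0 ≤ ξ := by linarith
  have hξ1 : 0 ≤ ξ - 1 := by linarith
  rw [integral_Ioi_exp_neg_mul_rpow ξ hY0, integral_Ioi_exp_neg_mul_rpow (ξ - 1) hY0, sub_sub,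
    one_add_one_eq_two, rpow_sub_one hY0.ne']
  calc exp (-Y) * Y ^ ξ + ξ * (exp (-Y) * (Y ^ ξ / Y) +
          (ξ - 1) * ∫ u in Ioi Y, exp (-u) * u ^ (ξ - 2))
      ≤ exp (-Y) * Y ^ ξ + ξ * (exp (-Y) * (Y ^ ξ / Y) + (ξ - 1) * (exp (-Y) * Y ^ ξ / Y)) := by
        gcongr
        exact integral_Ioi_exp_neg_mul_rpow_sub_two_le hξ0 hY hY0
    _ = exp (-Y) * Y ^ ξ * (1 + ξ ^ 2 / Y) := by ring
end

section
/- Define P_1(z) = z if |z| ≥ 1/2 and P_1(z) = 1 otherwise, and recursively P_{ν}(z) = ∏_{0 ≤ j ≤ ν-1, |z+j| ≥ 1/2} (z+j) over those indices j with |z+j| ≥ 1/2. Then for every z ∈ ℂ and every integer ν ≥ 1, |P_ν(z)| ≥ 2^{-ν} (ν-1)!. -/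
open Finset

/-- `P ν z` is the product of the factors `z + j` over `0 ≤ j ≤ ν - 1`
restricted to those `j` with `|z + j| ≥ 1/2` (empty product = 1). -/
noncomputable def Ppartial (ν : ℕ) (z : ℂ) : ℂ :=
  ∏ j ∈ Finset.range ν, if (1 : ℝ) / 2 ≤ ‖z + j‖ then z + j else 1

/-!
Each factor of `Ppartial ν z` has norm at least `max (1/2) |Re z + j|`, so it suffices to bound
`∏_{j ≤ n} max (1/2) |x + j|` for real `x`. Of the `n + 2` points `x, …, x + n + 1`, one of the two
endpoints lies at distance at least `(n + 1) / 2` from `0`; removing it and inducting on `n`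
produces the factor `(n + 1) / 2` of `(n + 1)! / 2 ^ (n + 2)`.
-/

open Nat in
theorem factorial_div_two_pow_le_prod_max_abs (n : ℕ) (x : ℝ) :
    (n ! : ℝ) / 2 ^ (n + 1) ≤ ∏ j ∈ range (n + 1), max (1 / 2) |x + j| := by
  induction n generalizing x with
  | zero => simp
  | succ n ih =>
    have hfactor : ((n + 1)! : ℝ) / 2 ^ (n + 1 + 1) = (n ! : ℝ) / 2 ^ (n + 1) * ((n + 1) / 2) := by
      push_cast [factorial_succ]; ring
    rw [hfactor]
    rcases le_or_gt (-((n + 1 : ℝ) / 2)) x with hx | hx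
    · rw [prod_range_succ]
      have hlast : (n + 1 : ℝ) / 2 ≤ |x + (n + 1 : ℕ)| := by
        push_cast; exact le_abs.mpr (Or.inl (by linarith))
      gcongr
      · exact ih x
      · exact hlast.trans (le_max_right _ _)
    · rw [prod_range_succ']
      have hfirst : (n + 1 : ℝ) / 2 ≤ |x + (0 : ℕ)| := by
        simp only [CharP.cast_eq_zero, add_zero]; exact le_abs.mpr (Or.inr (by linarith))
      have hshift : ∀ j : ℕ, x + (j + 1 : ℕ) = (x + 1) + j := fun j => by push_cast; ring
      simp only [hshift]
      gcongr
      · exact ih (x + 1)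
      · exact hfirst.trans (le_max_right _ _)

theorem max_half_abs_re_le_norm_ite (w : ℂ) :
    max (1 / 2) |w.re| ≤ ‖if (1 : ℝ) / 2 ≤ ‖w‖ then w else 1‖ := by
  have hre := Complex.abs_re_le_norm w
  split_ifs with h
  · exact max_le h hre
  · rw [norm_one]
    exact max_le (by norm_num) (by linarith [not_le.mp h])

theorem abs_Ppartial_ge (z : ℂ) (ν : ℕ) (hν : 1 ≤ ν) :
    ((Nat.factorial (ν - 1) : ℝ)) / 2 ^ ν ≤ ‖Ppartial ν z‖ := by
  obtain ⟨n, rfl⟩ := Nat.exists_eq_add_of_le' hν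
  rw [Nat.add_sub_cancel, Ppartial, norm_prod]
  refine (factorial_div_two_pow_le_prod_max_abs n z.re).trans (prod_le_prod ?_ ?_)
  · intro j _
    positivity
  · intro j _
    simpa using max_half_abs_re_le_norm_ite (z + j)
end

section
/- Let λ > 0, ρ ≥ 1 with λρ < 1, and let F(s) = ∑ a(n) n^{-s} be an entire function, absolutely convergent for Re(s) > 1, satisfying |F(s)| ≤ A^{|Re s|}(1+|s|)^{ρ|Re s| + B} e^{C|s|^δ} for all s, for some constants A, B, C > 0 and 0 ≤ δ < 1. Then for every α ∈ ℝ, the series ∑_{k=0}^∞ ((-1)^k/k!) F(s - λk)(2πiα)^k converges absolutely and uniformly on compact subsets of ℂ. -/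
open Real Complex Filter Topology Finset

lemma aux_summable (c1 c2 c3 c4 c5 : ℝ) (hc1 : 0 ≤ c1) (hc2 : 1 ≤ c2)
    (hc3 : 0 < c3) (hc40 : 0 ≤ c4) (hc41 : c4 < 1) (hc5 : 0 ≤ c5) :
    Summable (fun k : ℕ => c1 ^ k * (c2 + c3 * k) ^ (c4 * k + c5) / (k.factorial : ℝ)) := by
  set g : ℕ → ℝ := fun k => c1 ^ k * (c2 + c3 * k) ^ (c4 * k + c5) / (k.factorial : ℝ) with hg
  have hbase : ∀ k : ℕ, (1:ℝ) ≤ c2 + c3 * k := fun k => le_add_of_le_of_nonneg hc2 (by positivity)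
  have hgpos : ∀ k, 0 ≤ g k := by
    intro k
    have := hbase k
    apply div_nonneg (mul_nonneg (pow_nonneg hc1 _) (Real.rpow_nonneg (by linarith) _))
      (by positivity)
  have htend : Tendsto (fun k : ℕ =>
      c1 * Real.exp (c4 + c5) * (c2 + c3) ^ c4 * ((k:ℝ)+1) ^ (c4 - 1)) atTop (nhds 0) := by
    rw [show (0:ℝ) = c1 * Real.exp (c4+c5) * (c2+c3)^c4 * 0 by ring]
    apply Tendsto.const_mul
    have h1 : Tendsto (fun x : ℝ => x ^ (c4-1)) atTop (nhds 0) := by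
      have := tendsto_rpow_neg_atTop (by linarith : (0:ℝ) < 1 - c4)
      simpa [neg_sub] using this
    exact h1.comp (tendsto_atTop_add_const_right atTop 1 tendsto_natCast_atTop_atTop)
  have hev : ∀ᶠ k : ℕ in atTop,
      c1 * Real.exp (c4 + c5) * (c2 + c3) ^ c4 * ((k:ℝ)+1) ^ (c4 - 1) ≤ 1/2 := by
    filter_upwards [htend.eventually (ge_mem_nhds (by norm_num : (0:ℝ) < 1/2))] with k hk
    exact hk
  apply summable_of_ratio_norm_eventually_le (r := 1/2) (by norm_num)
  filter_upwards [hev, eventually_ge_atTop 1] with k hk hk1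
  rw [Real.norm_of_nonneg (hgpos _), Real.norm_of_nonneg (hgpos _)]
  have hk1' : (1:ℝ) ≤ (k:ℝ) := by exact_mod_cast hk1
  have hkpos : (0:ℝ) < k := by linarith
  have hx1 : (1:ℝ) ≤ c2 + c3 * k := hbase k
  have hx0 : (0:ℝ) < c2 + c3 * k := by linarith
  have hp0 : (0:ℝ) ≤ c4 * k + c5 := by positivity
  have hy0 : (0:ℝ) < c2 + c3 * ((k:ℝ)+1) := by nlinarith
  -- step B
  have hmul : c2 + c3 * ((k:ℝ)+1) ≤ (c2 + c3*k) * (1 + 1/k) := by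
    have h : (c2 + c3*k) * (1 + 1/k) = c2 + c3*k + (c2 + c3*k)/k := by field_simp
    rw [h]
    have : c3 ≤ (c2 + c3*k)/k := by
      rw [le_div_iff₀ hkpos]; nlinarith
    linarith
  have hone : (0:ℝ) < 1 + 1/(k:ℝ) := by positivity
  have hstepB : (c2 + c3 * ((k:ℝ)+1)) ^ (c4 * k + c5)
      ≤ (c2 + c3*k) ^ (c4*(k:ℝ)+c5) * Real.exp (c4+c5) := by
    calc (c2 + c3 * ((k:ℝ)+1)) ^ (c4 * k + c5)
        ≤ ((c2 + c3*k) * (1 + 1/k)) ^ (c4*(k:ℝ)+c5) :=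
          Real.rpow_le_rpow (by linarith) hmul hp0
      _ = (c2 + c3*k) ^ (c4*(k:ℝ)+c5) * (1 + 1/(k:ℝ)) ^ (c4*(k:ℝ)+c5) :=
          Real.mul_rpow (by linarith) (by positivity)
      _ ≤ (c2 + c3*k) ^ (c4*(k:ℝ)+c5) * Real.exp (c4+c5) := by
          apply mul_le_mul_of_nonneg_left _ (Real.rpow_nonneg (by linarith) _)
          rw [Real.rpow_def_of_pos hone]
          apply Real.exp_le_exp.2
          have hlog : Real.log (1 + 1/(k:ℝ)) ≤ 1/(k:ℝ) := by
            have := Real.log_le_sub_one_of_pos hone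
            linarith
          rw [mul_comm]
          calc (c4*(k:ℝ)+c5) * Real.log (1 + 1/(k:ℝ))
              ≤ (c4*(k:ℝ)+c5) * (1/(k:ℝ)) := mul_le_mul_of_nonneg_left hlog hp0
            _ = c4 + c5/(k:ℝ) := by field_simp
            _ ≤ c4 + c5 := by
                have : c5/(k:ℝ) ≤ c5 := by
                  rw [div_le_iff₀ hkpos]; nlinarith
                linarith
  -- step C
  have hstepC : (c2 + c3 * ((k:ℝ)+1)) ^ c4 ≤ (c2+c3)^c4 * ((k:ℝ)+1)^c4 := by
    rw [← Real.mul_rpow (by positivity) (by positivity)]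
    apply Real.rpow_le_rpow (by linarith) _ hc40
    nlinarith
  -- assemble
  have hfact : ((k+1).factorial : ℝ) = ((k:ℝ)+1) * (k.factorial : ℝ) := by
    rw [Nat.factorial_succ]; push_cast; ring
  have hsplit : (c2 + c3 * ((k:ℝ)+1)) ^ (c4 * ((k:ℝ)+1) + c5)
      = (c2 + c3 * ((k:ℝ)+1)) ^ c4 * (c2 + c3 * ((k:ℝ)+1)) ^ (c4 * (k:ℝ) + c5) := by
    rw [← Real.rpow_add hy0]; ring_nf
  have hkey : g (k+1) ≤ (c1 * Real.exp (c4 + c5) * (c2 + c3) ^ c4 * ((k:ℝ)+1) ^ (c4 - 1)) * g k := by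
    have hgk1 : g (k+1) = c1^k * c1 * (c2 + c3 * ((k:ℝ)+1)) ^ (c4 * ((k:ℝ)+1) + c5) / (((k:ℝ)+1) * (k.factorial : ℝ)) := by
      simp only [hg]
      rw [hfact]
      push_cast
      ring_nf
    rw [hgk1, hsplit]
    have hrsub : ((k:ℝ)+1) ^ (c4 - 1) = ((k:ℝ)+1)^c4 / ((k:ℝ)+1) := by
      rw [Real.rpow_sub (by positivity), Real.rpow_one]
    rw [hrsub]
    have hD : (0:ℝ) ≤ (c2 + c3*k) ^ (c4*(k:ℝ)+c5) := Real.rpow_nonneg (by linarith) _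
    have h2 : (c2 + c3 * ((k:ℝ)+1)) ^ c4 * (c2 + c3 * ((k:ℝ)+1)) ^ (c4 * (k:ℝ) + c5)
        ≤ ((c2+c3)^c4 * ((k:ℝ)+1)^c4) * ((c2 + c3*k) ^ (c4*(k:ℝ)+c5) * Real.exp (c4+c5)) := by
      apply mul_le_mul hstepC hstepB (Real.rpow_nonneg (by linarith) _) (by positivity)
    calc c1^k * c1 * ((c2 + c3 * ((k:ℝ)+1)) ^ c4 * (c2 + c3 * ((k:ℝ)+1)) ^ (c4 * (k:ℝ) + c5)) / (((k:ℝ)+1) * (k.factorial : ℝ))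
        ≤ c1^k * c1 * (((c2+c3)^c4 * ((k:ℝ)+1)^c4) * ((c2 + c3*k) ^ (c4*(k:ℝ)+c5) * Real.exp (c4+c5))) / (((k:ℝ)+1) * (k.factorial : ℝ)) := by
          apply div_le_div_of_nonneg_right _ (by positivity)
          exact mul_le_mul_of_nonneg_left h2 (by positivity)
      _ = (c1 * Real.exp (c4 + c5) * (c2 + c3) ^ c4 * (((k:ℝ)+1)^c4 / ((k:ℝ)+1))) * g k := by
          simp only [hg]
          field_simp
  calc g (k+1) ≤ (c1 * Real.exp (c4 + c5) * (c2 + c3) ^ c4 * ((k:ℝ)+1) ^ (c4 - 1)) * g k := hkey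
    _ ≤ (1/2) * g k := mul_le_mul_of_nonneg_right hk (hgpos k)
theorem twist_series_converges
    (a : ℕ → ℂ) (F : ℂ → ℂ) (hF : Differentiable ℂ F)
    (hFser : ∀ s : ℂ, 1 < s.re → HasSum (fun n : ℕ => a (n + 1) / ((n : ℂ) + 1) ^ s) (F s))
    (lam rho A B C δ : ℝ) (hlam : 0 < lam) (hrho : 1 ≤ rho) (hlamrho : lam * rho < 1)
    (hA : 0 < A) (hB : 0 < B) (hC : 0 < C) (hδ0 : 0 ≤ δ) (hδ1 : δ < 1)
    (hbound : ∀ s : ℂ, ‖F s‖ ≤ A ^ |s.re| * (1 + ‖s‖) ^ (rho * |s.re| + B) *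
      Real.exp (C * ‖s‖ ^ δ))
    (α : ℝ) :
    (∀ s : ℂ, Summable fun k : ℕ =>
        ‖((-1 : ℂ) ^ k / (Nat.factorial k : ℂ)) * F (s - (lam : ℂ) * k) *
          (2 * Real.pi * Complex.I * α) ^ k‖) ∧
    (∀ K : Set ℂ, IsCompact K →
      TendstoUniformlyOn
        (fun n s => ∑ k ∈ Finset.range n,
          ((-1 : ℂ) ^ k / (Nat.factorial k : ℂ)) * F (s - (lam : ℂ) * k) *
            (2 * Real.pi * Complex.I * α) ^ k)
        (fun s => ∑' k : ℕ,
          ((-1 : ℂ) ^ k / (Nat.factorial k : ℂ)) * F (s - (lam : ℂ) * k) *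
            (2 * Real.pi * Complex.I * α) ^ k)
        atTop K) := by
  have key : ∀ R : ℝ, 0 ≤ R → ∃ M : ℕ → ℝ, Summable M ∧ ∀ (s : ℂ), ‖s‖ ≤ R → ∀ k : ℕ,
      ‖((-1 : ℂ) ^ k / (Nat.factorial k : ℂ)) * F (s - (lam : ℂ) * k) *
          (2 * Real.pi * Complex.I * α) ^ k‖ ≤ M k := by
    intro R hR
    set A' := max A 1 with hA'def
    have hA'1 : (1:ℝ) ≤ A' := le_max_right _ _
    have hA'0 : (0:ℝ) < A' := lt_of_lt_of_le one_pos hA'1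
    set c1 : ℝ := A' ^ lam * (2*Real.pi*|α|+1) * Real.exp (C*lam) with hc1def
    refine ⟨fun k => (A' ^ R * Real.exp (C*(1+R))) *
      (c1 ^ k * ((1+R) + lam * k) ^ ((rho*lam) * k + (rho*R+B)) / (k.factorial : ℝ)), ?_, ?_⟩
    · exact (aux_summable c1 (1+R) lam (rho*lam) (rho*R+B)
        (by positivity) (by linarith) hlam (by positivity)
        (by nlinarith) (by nlinarith)).mul_left _
    · intro s hs k
      set t : ℂ := s - (lam : ℂ) * k with ht
      have hlamk : (0:ℝ) ≤ lam * k := by positivity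
      have hre : |t.re| ≤ R + lam * k := by
        have h1 : t.re = s.re - lam * k := by
          simp [ht, Complex.sub_re, Complex.mul_re]
        rw [h1]
        have h2 : |s.re| ≤ ‖s‖ := Complex.abs_re_le_norm s
        have := abs_sub_abs_le_abs_sub s.re (lam * k)
        have h3 : |s.re - lam * k| ≤ |s.re| + |lam * k| := abs_sub _ _
        rw [_root_.abs_of_nonneg hlamk] at h3
        linarith
      have hnt : ‖t‖ ≤ R + lam * k := by
        have h1 : ‖t‖ ≤ ‖s‖ + ‖(lam : ℂ) * k‖ := norm_sub_le _ _
        have h2 : ‖(lam : ℂ) * (k:ℂ)‖ = lam * k := by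
          rw [norm_mul, Complex.norm_real, Complex.norm_natCast,
            Real.norm_eq_abs, abs_of_pos hlam]
        rw [h2] at h1
        linarith
      have hnt0 : (0:ℝ) ≤ ‖t‖ := norm_nonneg _
      -- bound the three factors
      have hb1 : A ^ |t.re| ≤ A' ^ R * (A' ^ lam) ^ k := by
        calc A ^ |t.re| ≤ A' ^ |t.re| :=
              Real.rpow_le_rpow hA.le (le_max_left _ _) (abs_nonneg _)
          _ ≤ A' ^ (R + lam * k) := Real.rpow_le_rpow_of_exponent_le hA'1 hre
          _ = A' ^ R * (A' ^ lam) ^ k := by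
              rw [Real.rpow_add hA'0, ← Real.rpow_natCast (A' ^ lam) k,
                ← Real.rpow_mul hA'0.le]
      have hb2 : (1 + ‖t‖) ^ (rho * |t.re| + B)
          ≤ ((1+R) + lam * k) ^ ((rho*lam) * k + (rho*R+B)) := by
        have hbase1 : (1:ℝ) ≤ (1+R) + lam * k := by linarith
        calc (1 + ‖t‖) ^ (rho * |t.re| + B)
            ≤ ((1+R) + lam * k) ^ (rho * |t.re| + B) := by
              apply Real.rpow_le_rpow (by linarith) (by linarith) (by positivity)
          _ ≤ ((1+R) + lam * k) ^ ((rho*lam) * k + (rho*R+B)) := by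
              apply Real.rpow_le_rpow_of_exponent_le hbase1
              have : rho * |t.re| ≤ rho * (R + lam * k) :=
                mul_le_mul_of_nonneg_left hre (by linarith)
              nlinarith
      have hb3 : Real.exp (C * ‖t‖ ^ δ) ≤ Real.exp (C*(1+R)) * Real.exp (C*lam) ^ k := by
        rw [← Real.exp_nat_mul, ← Real.exp_add]
        apply Real.exp_le_exp.2
        have h1 : ‖t‖ ^ δ ≤ ((1+R) + lam*k) ^ δ :=
          Real.rpow_le_rpow hnt0 (by linarith) hδ0
        have h2 : ((1+R) + lam*k) ^ δ ≤ ((1+R) + lam*k) ^ (1:ℝ) :=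
          Real.rpow_le_rpow_of_exponent_le (by linarith) (by linarith)
        rw [Real.rpow_one] at h2
        have h3 : ‖t‖ ^ δ ≤ (1+R) + lam*k := le_trans h1 h2
        have := mul_le_mul_of_nonneg_left h3 hC.le
        nlinarith
      have hFt : ‖F t‖ ≤ (A' ^ R * (A' ^ lam) ^ k) *
          (((1+R) + lam * k) ^ ((rho*lam) * k + (rho*R+B))) *
          (Real.exp (C*(1+R)) * Real.exp (C*lam) ^ k) := by
        refine le_trans (hbound t) ?_
        apply mul_le_mul (mul_le_mul hb1 hb2 (by positivity) (by positivity)) hb3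
          (by positivity) (by positivity)
      -- norm of the term
      have hnorm : ‖((-1 : ℂ) ^ k / (Nat.factorial k : ℂ)) * F t *
          (2 * Real.pi * Complex.I * α) ^ k‖
          = ‖F t‖ * (2 * Real.pi * |α|) ^ k / (k.factorial : ℝ) := by
        rw [norm_mul, norm_mul, norm_div, norm_pow, norm_pow]
        rw [norm_mul, norm_mul, norm_mul]
        simp [Complex.norm_real, Real.norm_eq_abs, abs_of_pos Real.pi_pos]
        ring
      rw [hnorm]
      have hfac : (0:ℝ) < (k.factorial : ℝ) := by positivity
      rw [div_le_iff₀ hfac]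
      have hpow : (2 * Real.pi * |α|) ^ k ≤ (2*Real.pi*|α|+1) ^ k := by
        apply pow_le_pow_left₀ (by positivity) (by linarith)
      calc ‖F t‖ * (2 * Real.pi * |α|) ^ k
          ≤ ((A' ^ R * (A' ^ lam) ^ k) *
              (((1+R) + lam * k) ^ ((rho*lam) * k + (rho*R+B))) *
              (Real.exp (C*(1+R)) * Real.exp (C*lam) ^ k)) * (2*Real.pi*|α|+1) ^ k := by
            apply mul_le_mul hFt hpow (by positivity) (by positivity)
        _ = (A' ^ R * Real.exp (C*(1+R))) *
            (c1 ^ k * ((1+R) + lam * k) ^ ((rho*lam) * k + (rho*R+B)) / (k.factorial : ℝ)) *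
            (k.factorial : ℝ) := by
            rw [hc1def, mul_pow, mul_pow]
            field_simp
  constructor
  · intro s
    obtain ⟨M, hMsum, hM⟩ := key ‖s‖ (norm_nonneg s)
    exact Summable.of_nonneg_of_le (fun k => norm_nonneg _) (fun k => hM s le_rfl k) hMsum
  · intro K hK
    obtain ⟨r, hr⟩ := hK.isBounded.subset_closedBall 0
    obtain ⟨M, hMsum, hM⟩ := key (max r 0) (le_max_right _ _)
    apply tendstoUniformlyOn_tsum_nat hMsum
    intro k s hs
    apply hM s _ k
    have := hr hs
    rw [Metric.mem_closedBall, dist_zero_right] at this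
    exact le_trans this (le_max_left _ _)
end
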